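/- Let q = 2^m and t a positive integer. The binary cyclic code C_{1,t} of length q - 1 has minimum distance equal to 3 if and only if gcd(U_t(x), x^q + x) ≠ x(x+1) in F_2[x], where U_t(x) = 1 + x^t + (1+x)^t. -/

import Mathlib

/-!
Every nonzero codeword has weight at least `3`, because the `γ ^ i` with `i < q - 1` are nonzero
and pairwise distinct. A codeword of weight `3` supported on `{i, j, k}` amounts to distinct
`a, b, c ∈ Fˣ` with `a + b + c = 0` and `a ^ t + b ^ t + c ^ t = 0`; dividing by `c`, this is the
same as a root `x = a / c ∉ {0, 1}` of `U_t` (then `b / c = 1 + x`).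

On the polynomial side, `X (X + 1)` divides both `U_t` (for `t > 0`) and `X ^ q + X`, and
`X ^ q + X = ∏_{α ∈ F} (X - α)` is squarefree, so the gcd is strictly bigger than `X (X + 1)`
exactly when `U_t` has a root in `F ∖ {0, 1}`.
-/

open Polynomial

namespace Polynomial

instance subsingleton_units {R : Type*} [CommRing R] [IsDomain R] [Subsingleton Rˣ] :
    Subsingleton R[X]ˣ :=
  ⟨fun u v => Units.ext <| by
    obtain ⟨r, hr, hu⟩ := isUnit_iff.mp u.isUnit
    obtain ⟨s, hs, hv⟩ := isUnit_iff.mp v.isUnit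
    rw [← hu, ← hv, isUnit_iff_eq_one.mp hr, isUnit_iff_eq_one.mp hs]⟩

theorem X_mul_X_sub_one_dvd_X_pow_sub_X {R : Type*} [CommRing R] {n : ℕ} (hn : n ≠ 0) :
    X * (X - 1) ∣ (X ^ n - X : R[X]) := by
  have h : (X ^ n - X : R[X]) = X * (X ^ (n - 1) - 1 ^ (n - 1)) := by
    rw [one_pow, mul_sub, ← pow_succ', Nat.sub_add_cancel (Nat.pos_of_ne_zero hn), mul_one]
  exact h ▸ mul_dvd_mul_left X (sub_dvd_pow_sub_pow _ _ _)

section FiniteField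

variable {K F : Type*} [Field K] [Field F] [Fintype F]

theorem separable_X_pow_card_sub_X_self : (X ^ Fintype.card F - X : F[X]).Separable :=
  galois_poly_separable (ringChar F) _ <|
    (CharP.cast_eq_zero_iff F (ringChar F) _).mp (FiniteField.cast_card_eq_zero F)

theorem splits_X_pow_card_sub_X_self : Splits (X ^ Fintype.card F - X : F[X]) := by
  rw [splits_iff_card_roots, FiniteField.roots_X_pow_card_sub_X,
    FiniteField.X_pow_card_sub_X_natDegree_eq F Fintype.one_lt_card]
  exact Finset.card_univ

variable [Algebra K F]

theorem map_X_pow_card_sub_X :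
    (X ^ Fintype.card F - X : K[X]).map (algebraMap K F) = X ^ Fintype.card F - X := by
  simp

theorem separable_X_pow_card_sub_X : (X ^ Fintype.card F - X : K[X]).Separable := by
  rw [← separable_map (algebraMap K F), map_X_pow_card_sub_X]
  exact separable_X_pow_card_sub_X_self

theorem exists_aeval_eq_zero_of_dvd_X_pow_card_sub_X {h : K[X]} (hh : ¬IsUnit h)
    (hdvd : h ∣ X ^ Fintype.card F - X) : ∃ α : F, aeval α h = 0 := by
  have hQ : (X ^ Fintype.card F - X : F[X]) ≠ 0 :=
    FiniteField.X_pow_card_sub_X_ne_zero F Fintype.one_lt_card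
  have hh0 : h ≠ 0 := by
    rintro rfl
    rw [← map_X_pow_card_sub_X (K := K), zero_dvd_iff.mp hdvd, Polynomial.map_zero] at hQ
    exact hQ rfl
  have hsplits : Splits (h.map (algebraMap K F)) :=
    splits_X_pow_card_sub_X_self.of_dvd hQ <| by
      rw [← map_X_pow_card_sub_X (K := K)]; exact Polynomial.map_dvd _ hdvd
  obtain ⟨α, hα⟩ := hsplits.exists_eval_eq_zero <| by
    rw [degree_map]; exact (degree_pos_of_ne_zero_of_nonunit hh0 hh).ne'
  exact ⟨α, by rwa [aeval_def, eval₂_eq_eval_map]⟩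

theorem not_isRoot_of_mul_dvd_of_squarefree {Q d h : K[X]} (hQ : Squarefree Q)
    (hdvd : d * h ∣ Q) {a : K} (ha : X - C a ∣ d) : ¬ h.IsRoot a := fun hroot =>
  not_isUnit_X_sub_C a <| hQ _ <| (mul_dvd_mul ha (dvd_iff_isRoot.mpr hroot)).trans hdvd

theorem not_associated_gcd_X_pow_card_sub_X_iff [DecidableEq K[X]] {P : K[X]}
    (hP : X * (X - 1) ∣ P) :
    ¬ Associated (EuclideanDomain.gcd P (X ^ Fintype.card F - X)) (X * (X - 1)) ↔
      ∃ α : F, α ≠ 0 ∧ α ≠ 1 ∧ aeval α P = 0 := by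
  set Q : K[X] := X ^ Fintype.card F - X
  constructor
  · intro hne
    obtain ⟨h, hgh⟩ :=
      EuclideanDomain.dvd_gcd hP (X_mul_X_sub_one_dvd_X_pow_sub_X (Fintype.card_ne_zero (α := F)))
    have hhP : X * (X - 1) * h ∣ P := hgh ▸ EuclideanDomain.gcd_dvd_left P Q
    have hhQ : X * (X - 1) * h ∣ Q := hgh ▸ EuclideanDomain.gcd_dvd_right P Q
    rw [hgh] at hne
    have hsq : Squarefree Q := separable_X_pow_card_sub_X.squarefree
    obtain ⟨α, hα⟩ := exists_aeval_eq_zero_of_dvd_X_pow_card_sub_X (F := F)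
      (fun hu => hne (associated_mul_unit_left _ _ hu)) ((dvd_mul_left h _).trans hhQ)
    -- `X ^ q - X` is squarefree, so the cofactor `h` cannot vanish where `X * (X - 1)` does.
    have hroot (a : K) (ha : X - C a ∣ X * (X - 1)) : α ≠ algebraMap K F a := by
      rintro rfl
      refine not_isRoot_of_mul_dvd_of_squarefree hsq hhQ ha ?_
      rwa [aeval_algebraMap_apply, map_eq_zero_iff _ (algebraMap K F).injective] at hα
    refine ⟨α, ?_, ?_, aeval_eq_zero_of_dvd_aeval_eq_zero
      ((dvd_mul_left h _).trans hhP) hα⟩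
    · simpa using hroot 0 (by simp)
    · simpa using hroot 1 (by simp)
  · rintro ⟨α, hα0, hα1, hαP⟩ hg
    have hαQ : aeval α Q = 0 := by simp [Q, FiniteField.pow_card]
    have hαg : aeval α (EuclideanDomain.gcd P Q) = 0 := by
      rw [EuclideanDomain.gcd_eq_gcd_ab P Q]; simp [hαP, hαQ]
    have := aeval_eq_zero_of_dvd_aeval_eq_zero hg.dvd hαg
    simp [sub_eq_zero, hα0, hα1] at this

end FiniteField

theorem X_mul_X_sub_one_dvd_one_add_X_pow_add_one_add_X_pow {t : ℕ} (ht : 0 < t) :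
    X * (X - 1) ∣ (1 + X ^ t + (1 + X) ^ t : (ZMod 2)[X]) := by
  have h11 : (1 + 1 : ZMod 2) = 0 := rfl
  have hX : X ∣ (1 + X ^ t + (1 + X) ^ t : (ZMod 2)[X]) := by
    rw [X_dvd_iff, coeff_zero_eq_eval_zero]
    simp only [eval_add, eval_one, eval_pow, eval_X, zero_pow ht.ne', add_zero, one_pow, h11]
  have hX1 : X - C 1 ∣ (1 + X ^ t + (1 + X) ^ t : (ZMod 2)[X]) := by
    rw [dvd_iff_isRoot, IsRoot.def]
    simp only [eval_add, eval_one, eval_pow, eval_X, one_pow, h11, zero_pow ht.ne', add_zero]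
  have hcop : IsCoprime (X : (ZMod 2)[X]) (X - C 1) := by
    simpa using isCoprime_X_sub_C_of_isUnit_sub (R := ZMod 2) (a := 0) (b := 1) (by simp)
  simpa using hcop.mul_dvd hX hX1

theorem gcd_ne_X_mul_X_add_one_iff (F : Type*) [Field F] [Fintype F] [Algebra (ZMod 2) F]
    [DecidableEq (ZMod 2)[X]] {t : ℕ} (ht : 0 < t) :
    EuclideanDomain.gcd (1 + X ^ t + (1 + X) ^ t : (ZMod 2)[X]) (X ^ Fintype.card F + X) ≠
        X * (X + 1) ↔
      ∃ x : F, x ≠ 0 ∧ x ≠ 1 ∧ 1 + x ^ t + (1 + x) ^ t = 0 := by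
  have hsub (p q : (ZMod 2)[X]) : p + q = p - q := (CharTwo.sub_eq_add p q).symm
  rw [hsub (X ^ _), hsub X 1, Ne, ← associated_iff_eq, not_associated_gcd_X_pow_card_sub_X_iff
    (X_mul_X_sub_one_dvd_one_add_X_pow_add_one_add_X_pow ht)]
  simp

end Polynomial

section PrimitiveElement

variable {F : Type*} [Field F] [Fintype F] {γ : F}

-- A "primitive element" `γ = 0` is possible only over `𝔽₂`, where `0 ^ 0 = 1` is the only unit.
theorem card_le_two_of_forall_exists_zero_pow (hγ : ∀ x : F, x ≠ 0 → ∃ k : ℕ, (0 : F) ^ k = x) :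
    Fintype.card F ≤ 2 := by
  classical
  have hsub : (Finset.univ : Finset F) ⊆ {0, 1} := fun x _ => by
    rcases eq_or_ne x 0 with rfl | hx
    · simp
    · obtain ⟨k, rfl⟩ := hγ x hx
      rcases k.eq_zero_or_pos with rfl | hk
      · simp
      · simp [zero_pow hk.ne']
  exact (Finset.card_le_card hsub).trans Finset.card_le_two

variable (hγ : ∀ x : F, x ≠ 0 → ∃ k : ℕ, γ ^ k = x)
include hγ

theorem orderOf_eq_card_sub_one_of_forall_exists_pow (hγ0 : γ ≠ 0) :
    orderOf γ = Fintype.card F - 1 := by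
  classical
  rw [← Units.val_mk0 hγ0, orderOf_units, ← Fintype.card_units, ← Nat.card_eq_fintype_card]
  refine orderOf_eq_card_of_forall_mem_powers fun u => ?_
  obtain ⟨k, hk⟩ := hγ u u.ne_zero
  exact ⟨k, Units.ext (by simpa using hk)⟩

theorem injOn_pow_Iio_card_sub_one : Set.InjOn (γ ^ ·) (Set.Iio (Fintype.card F - 1)) := by
  rcases eq_or_ne γ 0 with rfl | hγ0
  · have := card_le_two_of_forall_exists_zero_pow hγ
    refine Set.Subsingleton.injOn (fun i hi j hj => ?_) _
    simp only [Set.mem_Iio] at hi hj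
    omega
  · rw [← orderOf_eq_card_sub_one_of_forall_exists_pow hγ hγ0]
    exact pow_injOn_Iio_orderOf

theorem pow_ne_zero_of_lt_card_sub_one {i : ℕ} (hi : i < Fintype.card F - 1) : γ ^ i ≠ 0 := by
  rcases eq_or_ne γ 0 with rfl | hγ0
  · have := card_le_two_of_forall_exists_zero_pow hγ
    obtain rfl : i = 0 := by omega
    exact (pow_zero (0 : F)).symm ▸ one_ne_zero
  · exact pow_ne_zero i hγ0

theorem exists_lt_card_sub_one_pow_eq {x : F} (hx : x ≠ 0) :
    ∃ i < Fintype.card F - 1, γ ^ i = x := by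
  obtain ⟨k, rfl⟩ := hγ x hx
  rcases eq_or_ne γ 0 with rfl | hγ0
  · obtain rfl : k = 0 := by contrapose! hx; exact zero_pow hx
    exact ⟨0, by have := Fintype.one_lt_card (α := F); omega, rfl⟩
  · have hord := orderOf_eq_card_sub_one_of_forall_exists_pow hγ hγ0
    refine ⟨k % orderOf γ, hord ▸ Nat.mod_lt _ ?_, pow_mod_orderOf γ k⟩
    have := Fintype.one_lt_card (α := F)
    omega

end PrimitiveElement

theorem sum_algebraMap_zmod_two_mul {ι R : Type*} [Fintype ι] [Semiring R] [Algebra (ZMod 2) R]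
    (c : ι → ZMod 2) (f : ι → R) :
    ∑ i, algebraMap (ZMod 2) R (c i) * f i = ∑ i ∈ Finset.univ.filter (fun i => c i ≠ 0), f i := by
  rw [Finset.sum_filter]
  refine Finset.sum_congr rfl fun i _ => ?_
  rcases (by decide : ∀ a : ZMod 2, a = 0 ∨ a = 1) (c i) with h | h <;> simp [h]

theorem setOf_weight_eq_image_card {ι R : Type*} [Fintype ι] [DecidableEq ι] [Semiring R]
    [Algebra (ZMod 2) R] (f g : ι → R) :
    {w : ℕ | ∃ c : ι → ZMod 2,
        (∑ i, algebraMap (ZMod 2) R (c i) * f i = 0) ∧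
        (∑ i, algebraMap (ZMod 2) R (c i) * g i = 0) ∧
        c ≠ 0 ∧ (Finset.univ.filter fun i => c i ≠ 0).card = w} =
      Finset.card '' {s : Finset ι | s.Nonempty ∧ ∑ i ∈ s, f i = 0 ∧ ∑ i ∈ s, g i = 0} := by
  ext w
  simp only [sum_algebraMap_zmod_two_mul]
  constructor
  · rintro ⟨c, hf, hg, hc, rfl⟩
    obtain ⟨i, hi⟩ := Function.ne_iff.mp hc
    exact ⟨_, ⟨⟨i, by simpa using hi⟩, hf, hg⟩, rfl⟩
  · rintro ⟨s, ⟨hs, hf, hg⟩, rfl⟩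
    have hsupp : Finset.univ.filter (fun i => (if i ∈ s then 1 else 0 : ZMod 2) ≠ 0) = s := by
      ext i; by_cases hi : i ∈ s <;> simp [hi]
    obtain ⟨i, hi⟩ := hs
    refine ⟨fun i => if i ∈ s then 1 else 0, ?_, ?_, Function.ne_iff.mpr ⟨i, by simp [hi]⟩, ?_⟩ <;>
      rw [hsupp]
    exacts [hf, hg]

theorem Nat.sInf_eq_iff_mem_of_forall_le {S : Set ℕ} {a : ℕ} (ha : a ≠ 0) (h : ∀ w ∈ S, a ≤ w) :
    sInf S = a ↔ a ∈ S := by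
  refine ⟨fun hS => ?_, fun haS => le_antisymm (Nat.sInf_le haS) (le_csInf ⟨a, haS⟩ h)⟩
  have hne : S.Nonempty := by
    contrapose! ha
    rw [← hS, ha, Nat.sInf_empty]
  exact hS ▸ Nat.sInf_mem hne

theorem one_add_div_pow_add_one_add_div_pow_eq_zero {F : Type*} [Field F] [CharP F 2] {t : ℕ}
    {a b c : F} (hc : c ≠ 0) (h₁ : a + b + c = 0) (h₂ : a ^ t + b ^ t + c ^ t = 0) :
    1 + (a / c) ^ t + (1 + a / c) ^ t = 0 := by
  have hb : 1 + a / c = b / c := by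
    rw [eq_div_iff hc, add_mul, one_mul, div_mul_cancel₀ a hc]
    linear_combination h₁ - b * CharTwo.two_eq_zero (R := F)
  calc 1 + (a / c) ^ t + (1 + a / c) ^ t = (a ^ t + b ^ t + c ^ t) / c ^ t := by
        rw [hb, div_pow, div_pow]; field_simp; ring
    _ = 0 := by rw [h₂, zero_div]

section PrimitiveCode

variable {F : Type*} [Field F] [Fintype F] [CharP F 2] {γ : F}
  (hγ : ∀ x : F, x ≠ 0 → ∃ k : ℕ, γ ^ k = x)
include hγ

theorem three_le_card_of_sum_pow_eq_zero {s : Finset (Fin (Fintype.card F - 1))}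
    (hs : s.Nonempty) (h : ∑ i ∈ s, γ ^ (i : ℕ) = 0) : 3 ≤ s.card := by
  by_contra! hlt
  obtain ⟨i, rfl⟩ | ⟨i, j, hij, rfl⟩ : (∃ i, s = {i}) ∨ ∃ i j, i ≠ j ∧ s = {i, j} := by
    have := hs.card_pos
    interval_cases hcard : s.card
    exacts [.inl (Finset.card_eq_one.mp hcard), .inr (Finset.card_eq_two.mp hcard)]
  · exact pow_ne_zero_of_lt_card_sub_one hγ i.isLt (by simpa using h)
  · rw [Finset.sum_pair hij, CharTwo.add_eq_zero] at h
    exact hij (Fin.ext (injOn_pow_Iio_card_sub_one hγ i.isLt j.isLt h))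

theorem exists_root_of_card_eq_three {t : ℕ} {s : Finset (Fin (Fintype.card F - 1))}
    (hs : s.card = 3) (h₁ : ∑ i ∈ s, γ ^ (i : ℕ) = 0) (h₂ : ∑ i ∈ s, (γ ^ (i : ℕ)) ^ t = 0) :
    ∃ x : F, x ≠ 0 ∧ x ≠ 1 ∧ 1 + x ^ t + (1 + x) ^ t = 0 := by
  obtain ⟨i, j, k, hij, hik, hjk, rfl⟩ := Finset.card_eq_three.mp hs
  rw [Finset.sum_insert (by simp [hij, hik]), Finset.sum_pair hjk, ← add_assoc] at h₁ h₂
  have hk := pow_ne_zero_of_lt_card_sub_one hγ k.isLt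
  refine ⟨γ ^ (i : ℕ) / γ ^ (k : ℕ), div_ne_zero (pow_ne_zero_of_lt_card_sub_one hγ i.isLt) hk,
    fun h => hik (Fin.ext (injOn_pow_Iio_card_sub_one hγ i.isLt k.isLt ?_)),
    one_add_div_pow_add_one_add_div_pow_eq_zero hk h₁ h₂⟩
  exact (div_eq_one_iff_eq hk).mp h

theorem exists_card_eq_three_of_root {t : ℕ} {x : F} (hx₀ : x ≠ 0) (hx₁ : x ≠ 1)
    (hx : 1 + x ^ t + (1 + x) ^ t = 0) :
    ∃ s : Finset (Fin (Fintype.card F - 1)), s.card = 3 ∧ ∑ i ∈ s, γ ^ (i : ℕ) = 0 ∧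
      ∑ i ∈ s, (γ ^ (i : ℕ)) ^ t = 0 := by
  obtain ⟨i, hi, hγi⟩ := exists_lt_card_sub_one_pow_eq hγ hx₀
  obtain ⟨j, hj, hγj⟩ := exists_lt_card_sub_one_pow_eq hγ (x := 1 + x) fun h => hx₁ <| by
    linear_combination h - CharTwo.two_eq_zero (R := F)
  obtain ⟨k, hk, hγk⟩ := exists_lt_card_sub_one_pow_eq hγ one_ne_zero
  have hne {a b : Fin (Fintype.card F - 1)} (h : γ ^ (a : ℕ) ≠ γ ^ (b : ℕ)) : a ≠ b :=
    ne_of_apply_ne (fun a : Fin _ => γ ^ (a : ℕ)) h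
  have hij : (⟨i, hi⟩ : Fin _) ≠ ⟨j, hj⟩ := hne <| by
    rw [hγi, hγj]; exact fun h => one_ne_zero (by linear_combination -h)
  have hik : (⟨i, hi⟩ : Fin _) ≠ ⟨k, hk⟩ := hne <| by rwa [hγi, hγk]
  have hjk : (⟨j, hj⟩ : Fin _) ≠ ⟨k, hk⟩ := hne <| by
    rw [hγj, hγk]; exact fun h => hx₀ (by linear_combination h)
  refine ⟨{⟨i, hi⟩, ⟨j, hj⟩, ⟨k, hk⟩}, Finset.card_eq_three.mpr ⟨_, _, _, hij, hik, hjk, rfl⟩, ?_⟩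
  rw [Finset.sum_insert (by simp [hij, hik]), Finset.sum_pair hjk,
    Finset.sum_insert (by simp [hij, hik]), Finset.sum_pair hjk]
  simp only [hγi, hγj, hγk, one_pow]
  constructor
  · linear_combination (x + 1) * CharTwo.two_eq_zero (R := F)
  · linear_combination hx

end PrimitiveCode

open Polynomial in
theorem stmt_9_general (m t : ℕ) (ht : 0 < t)
    (F : Type) [Field F] [Fintype F] [Algebra (ZMod 2) F]
    (hcard : Fintype.card F = 2 ^ m)
    (γ : F) (hγ : ∀ x : F, x ≠ 0 → ∃ k : ℕ, γ ^ k = x)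
    (n : ℕ) (hn : n = 2 ^ m - 1) :
    sInf {w : ℕ | ∃ c : Fin n → ZMod 2,
        (∑ i : Fin n, algebraMap (ZMod 2) F (c i) * γ ^ (i : ℕ) = 0) ∧
        (∑ i : Fin n, algebraMap (ZMod 2) F (c i) * γ ^ (t * (i : ℕ)) = 0) ∧
        c ≠ 0 ∧ (Finset.univ.filter fun i => c i ≠ 0).card = w} = 3 ↔
      EuclideanDomain.gcd (1 + X ^ t + (1 + X) ^ t : Polynomial (ZMod 2))
          (X ^ (2 ^ m) + X) ≠ X * (X + 1) := by
  have : CharP F 2 := charP_of_injective_algebraMap' (ZMod 2) 2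
  obtain rfl : n = Fintype.card F - 1 := by rw [hn, hcard]
  simp_rw [pow_mul']
  rw [setOf_weight_eq_image_card, Nat.sInf_eq_iff_mem_of_forall_le three_ne_zero
    (by rintro _ ⟨s, ⟨hs, h, -⟩, rfl⟩; exact three_le_card_of_sum_pow_eq_zero hγ hs h),
    ← hcard, gcd_ne_X_mul_X_add_one_iff F ht]
  constructor
  · rintro ⟨s, ⟨-, h₁, h₂⟩, hs⟩
    exact exists_root_of_card_eq_three hγ hs h₁ h₂
  · rintro ⟨x, hx₀, hx₁, hx⟩
    obtain ⟨s, hs, h₁, h₂⟩ := exists_card_eq_three_of_root hγ hx₀ hx₁ hx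
    exact ⟨s, ⟨Finset.card_pos.mp (by omega), h₁, h₂⟩, hs⟩

open Polynomial in
/-- `C_{1,t}` has minimum distance `3` iff
`gcd(U_t(x), x^q + x) ≠ x(x+1)` in `F_2[x]`. -/
theorem stmt_9 (m t : ℕ) (hm : 0 < m) (ht : 0 < t)
    (F : Type) [Field F] [Fintype F] [Algebra (ZMod 2) F]
    (hcard : Fintype.card F = 2 ^ m)
    (γ : F) (hγ : ∀ x : F, x ≠ 0 → ∃ k : ℕ, γ ^ k = x)
    (n : ℕ) (hn : n = 2 ^ m - 1) :
    sInf {w : ℕ | ∃ c : Fin n → ZMod 2,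
        (∑ i : Fin n, algebraMap (ZMod 2) F (c i) * γ ^ (i : ℕ) = 0) ∧
        (∑ i : Fin n, algebraMap (ZMod 2) F (c i) * γ ^ (t * (i : ℕ)) = 0) ∧
        c ≠ 0 ∧ (Finset.univ.filter fun i => c i ≠ 0).card = w} = 3 ↔
      EuclideanDomain.gcd (1 + X ^ t + (1 + X) ^ t : Polynomial (ZMod 2))
          (X ^ (2 ^ m) + X) ≠ X * (X + 1) :=
  stmt_9_general m t ht F hcard γ hγ n hn
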